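/- Let p be a prime and R a commutative unital ring. Consider, in the R-module of formal Laurent series over R, the family consisting of the constant series 1 together with all series H_{a_1,a_2,…,a_r}(z) where r ≥ 1 and all a_i are positive integers relatively prime to p. This family is linearly independent over the ring R[z, z^{−1}] of Laurent polynomials: if q_0(z) + Σ_{i=1}^{N} q_i(z) · H_{a_1^{(i)},…,a_{r_i}^{(i)}}(z) = 0 where the q_i(z) ∈ R[z,z^{−1}], the tuples (a_1^{(i)},…,a_{r_i}^{(i)}) are pairwise distinct and all entries a_j^{(i)} are positive integers relatively prime to p, then q_0(z) = q_1(z) = … = q_N(z) = 0. In particular, the family is linearly independent over (ℤ/p^γℤ)[z,z^{−1}] for every positive integer γ and over ℤ[z,z^{−1}]. -/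

import Mathlib

/-!
Take `i₀` of maximal length `ρ` among the nonzero `q i`, an exponent `e`, and
`A = Σ_j a^{(i₀)}_j p^{(ρ - j) Γ}` with `Γ` huge, and compare coefficients of `z^{A + e}`.
As the `q i` are Laurent polynomials, only coefficients of the `H`'s at `A + c` with `c` bounded
occur. A representation `Σ_k b_k p^{m_k} = A + c` with at most `ρ` terms, whose coefficients are
bounded and prime to `p`, must be the one defining `A`, with `c = 0`: by pigeonhole some window
of `G` consecutive exponents below the top exponent of `A` (with `p ^ G` large) contains no
`m_k`, so the terms above the window sum to a multiple of a power of `p` that differs from the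
top term of `A` by less than that power, hence equal it; induction on the number of terms
finishes. So that coefficient of the relation is `q_{i₀}(e)`, and `q_{i₀} = 0`.
-/

open PowerSeries

/-- `H_{a_1,…,a_r}(z) = Σ_{n_1 > n_2 > … > n_r ≥ 0} z^{a_1 p^{n_1} + … + a_r p^{n_r}}`
as a formal power series over `ℤ`. -/
noncomputable def Hser (p : ℕ) {r : ℕ} (a : Fin r → ℕ) : PowerSeries ℤ :=
  PowerSeries.mk fun m =>
    ((Set.ncard {n : Fin r → ℕ | StrictAnti n ∧ ∑ i, a i * p ^ n i = m} : ℕ) : ℤ)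

/-- The series `H_{a_1,…,a_r}(z)`, viewed as a formal Laurent series over a
commutative ring `R` (via the natural map `ℤ → R` on coefficients). -/
noncomputable def HserR (p : ℕ) (R : Type*) [CommRing R] {r : ℕ} (a : Fin r → ℕ) :
    LaurentSeries R :=
  HahnSeries.ofPowerSeries ℤ R (PowerSeries.map (Int.castRingHom R) (Hser p a))


def powSum (p : ℕ) (l : List (ℕ × ℕ)) : ℤ :=
  (l.map fun t => (t.1 : ℤ) * (p : ℤ) ^ t.2).sum

section powSum

variable {p : ℕ}

@[simp]
lemma powSum_nil : powSum p [] = 0 := rfl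

@[simp]
lemma powSum_cons (t : ℕ × ℕ) (l : List (ℕ × ℕ)) :
    powSum p (t :: l) = t.1 * (p : ℤ) ^ t.2 + powSum p l := by
  simp [powSum]

@[simp]
lemma powSum_append (l₁ l₂ : List (ℕ × ℕ)) : powSum p (l₁ ++ l₂) = powSum p l₁ + powSum p l₂ := by
  simp [powSum]

lemma powSum_ofFn {s : ℕ} (b x : Fin s → ℕ) :
    powSum p (List.ofFn fun k => (b k, x k)) = ((∑ k, b k * p ^ x k : ℕ) : ℤ) := by
  simp [powSum, List.map_ofFn, List.sum_ofFn, Function.comp_def]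

lemma powSum_nonneg (l : List (ℕ × ℕ)) : 0 ≤ powSum p l := by
  induction l with
  | nil => rfl
  | cons t l ih => rw [powSum_cons]; positivity

lemma powSum_le_of_forall {B n : ℕ} (hp : 0 < p) {l : List (ℕ × ℕ)}
    (h : ∀ t ∈ l, t.1 ≤ B ∧ t.2 ≤ n) : powSum p l ≤ l.length * B * (p : ℤ) ^ n := by
  induction l with
  | nil => simp
  | cons t l ih =>
    simp only [List.mem_cons, forall_eq_or_imp] at h
    have ht : (t.1 : ℤ) * (p : ℤ) ^ t.2 ≤ B * (p : ℤ) ^ n := by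
      gcongr
      · exact_mod_cast h.1.1
      · exact_mod_cast hp
      · exact h.1.2
    rw [powSum_cons, List.length_cons]
    push_cast
    linarith [ih h.2]

lemma abs_powSum_add_le {B M G n : ℕ} (hp : 0 < p) {l : List (ℕ × ℕ)}
    (hl : ∀ t ∈ l, t.1 ≤ B ∧ t.2 ≤ n) (hG : l.length * B + M ≤ p ^ G) {c : ℤ} (hc : |c| ≤ M) :
    |powSum p l + c| ≤ (p : ℤ) ^ (G + n) := by
  have hsum := powSum_le_of_forall hp hl
  have hpow : (1 : ℤ) ≤ (p : ℤ) ^ n := one_le_pow₀ (by exact_mod_cast hp)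
  have hG' : (l.length * B + M : ℤ) ≤ (p : ℤ) ^ G := by exact_mod_cast hG
  calc |powSum p l + c| ≤ powSum p l + M := by
        have := abs_add_le (powSum p l) c
        rw [abs_of_nonneg (powSum_nonneg l)] at this
        linarith
    _ ≤ (l.length * B + M) * (p : ℤ) ^ n := by nlinarith
    _ ≤ (p : ℤ) ^ G * (p : ℤ) ^ n := by gcongr
    _ = (p : ℤ) ^ (G + n) := (pow_add _ _ _).symm

lemma pow_dvd_powSum {k : ℕ} {l : List (ℕ × ℕ)} (h : ∀ t ∈ l, k ≤ t.2) :
    (p : ℤ) ^ k ∣ powSum p l := by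
  induction l with
  | nil => simp
  | cons t l ih =>
    simp only [List.mem_cons, forall_eq_or_imp] at h
    rw [powSum_cons]
    exact dvd_add (Dvd.dvd.mul_left (pow_dvd_pow _ h.1) _) (ih h.2)

end powSum

lemma exists_le_card_forall_notMem_Ico (S : Finset ℕ) (x w : ℕ) :
    ∃ i ≤ S.card, ∀ m ∈ S, m ∉ Finset.Ico (x + i * w) (x + (i + 1) * w) := by
  obtain ⟨i, hi, hiS⟩ := Finset.exists_mem_notMem_of_card_lt_card
    (s := S.image fun m => (m - x) / w) (t := Finset.range (S.card + 1))
    (by simpa using Finset.card_image_le.trans_lt (Nat.lt_succ_self _))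
  refine ⟨i, Nat.lt_succ_iff.mp (Finset.mem_range.mp hi), fun m hm hmi => hiS ?_⟩
  rw [Finset.mem_Ico] at hmi
  exact Finset.mem_image.mpr ⟨m, hm, Nat.div_eq_of_lt_le (by omega) (by omega)⟩

lemma List.exists_eq_append_of_pairwise {α : Type*} {P : α → Prop} {l : List α}
    (h : l.Pairwise fun a b => P b → P a) :
    ∃ l₁ l₂, l = l₁ ++ l₂ ∧ (∀ a ∈ l₁, P a) ∧ ∀ a ∈ l₂, ¬ P a := by
  induction l with
  | nil => exact ⟨[], [], rfl, by simp, by simp⟩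
  | cons a l ih =>
    rw [List.pairwise_cons] at h
    by_cases ha : P a
    · obtain ⟨l₁, l₂, rfl, h₁, h₂⟩ := ih h.2
      exact ⟨a :: l₁, l₂, rfl, List.forall_mem_cons.mpr ⟨ha, h₁⟩, h₂⟩
    · exact ⟨[], a :: l, rfl, by simp,
        List.forall_mem_cons.mpr ⟨ha, fun b hb hPb => ha (h.1 b hb hPb)⟩⟩

lemma Nat.eq_and_eq_of_mul_pow_eq {p a b m n : ℕ} (hp : 0 < p) (ha : ¬ p ∣ a) (hb : ¬ p ∣ b)
    (h : a * p ^ m = b * p ^ n) : a = b ∧ m = n := by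
  wlog hmn : m ≤ n generalizing a b m n
  · exact (this hb ha h.symm (by omega)).imp Eq.symm Eq.symm
  obtain ⟨d, rfl⟩ := Nat.exists_eq_add_of_le hmn
  have had : a = b * p ^ d := Nat.eq_of_mul_eq_mul_right (pow_pos hp m) (by rw [h]; ring)
  rcases d with _ | d
  · simpa using had
  · exact absurd (had ▸ Dvd.dvd.mul_left (dvd_pow_self p d.succ_ne_zero) b) ha

lemma exists_append_pow_dvd_powSum {p B G : ℕ} (hp : 0 < p) {L : List (ℕ × ℕ)}
    (hL : L.Pairwise fun t t' => t'.2 < t.2) (hB : ∀ t ∈ L, t.1 ≤ B) (hG : L.length * B ≤ p ^ G)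
    (y : ℕ) : ∃ hi lo K, L = hi ++ lo ∧ y + G ≤ K ∧ K + 2 ≤ y + (L.length + 1) * (G + 2) ∧
      (p : ℤ) ^ (K + 2) ∣ powSum p hi ∧ powSum p lo ≤ (p : ℤ) ^ K := by
  obtain ⟨i, hiL, hfree⟩ := exists_le_card_forall_notMem_Ico (L.map Prod.snd).toFinset y (G + 2)
  replace hiL : i ≤ L.length := hiL.trans ((List.toFinset_card_le _).trans (List.length_map _).le)
  set K := y + i * (G + 2) + G
  obtain ⟨hi, lo, rfl, hhi, hlo⟩ := List.exists_eq_append_of_pairwise (P := fun t => K + 2 ≤ t.2)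
    (hL.imp fun h h' => by omega)
  refine ⟨hi, lo, K, rfl, by omega, ?_, pow_dvd_powSum hhi, ?_⟩
  · have := Nat.mul_le_mul_right (G + 2) hiL
    simp only [K, add_mul] at this ⊢
    omega
  have hlo' : ∀ t ∈ lo, t.1 ≤ B ∧ t.2 ≤ y + i * (G + 2) := by
    intro t ht
    have hout := hfree t.2 <| List.mem_toFinset.mpr <| List.mem_map.mpr ⟨t, by simp [ht], rfl⟩
    have hlt := hlo t ht
    simp only [Finset.mem_Ico, add_mul, K] at hout hlt
    exact ⟨hB t (by simp [ht]), by omega⟩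
  have hlen : lo.length * B ≤ p ^ G :=
    le_trans (Nat.mul_le_mul_right _ (by simp)) hG
  calc powSum p lo ≤ lo.length * B * (p : ℤ) ^ (y + i * (G + 2)) := powSum_le_of_forall hp hlo'
    _ ≤ (p : ℤ) ^ G * (p : ℤ) ^ (y + i * (G + 2)) := by gcongr; exact_mod_cast hlen
    _ = (p : ℤ) ^ K := by rw [← pow_add]; congr 1; omega

lemma exists_append_powSum_eq_mul_pow_add {p B G y a₀ n₀ : ℕ} (hp : 2 ≤ p) {L : List (ℕ × ℕ)}
    (hL : L.Pairwise fun t t' => t'.2 < t.2) (hB : ∀ t ∈ L, t.1 ≤ B) (hG : L.length * B ≤ p ^ G)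
    (hn₀ : y + (L.length + 1) * (G + 2) ≤ n₀) {E : ℤ} (hE : |E| ≤ (p : ℤ) ^ (G + y))
    (h : powSum p L = a₀ * (p : ℤ) ^ n₀ + E) :
    ∃ hi lo, L = hi ++ lo ∧ powSum p hi = a₀ * (p : ℤ) ^ n₀ ∧ powSum p lo = E := by
  obtain ⟨hi, lo, K, rfl, hyK, hKn₀, hdvd, hlo⟩ :=
    exists_append_pow_dvd_powSum (by omega) hL hB hG y
  -- `powSum hi - a₀ p ^ n₀` is divisible by `p ^ (K + 2)` but smaller than it in absolute value
  have hsmall : |powSum p hi - a₀ * (p : ℤ) ^ n₀| < (p : ℤ) ^ (K + 2) := by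
    have hEK : (p : ℤ) ^ (G + y) ≤ (p : ℤ) ^ K :=
      pow_le_pow_right₀ (by exact_mod_cast (by omega : 1 ≤ p)) (by omega)
    have hp2 : (4 : ℤ) * (p : ℤ) ^ K ≤ (p : ℤ) ^ (K + 2) := by
      rw [pow_add, mul_comm]
      gcongr
      nlinarith [(by exact_mod_cast hp : (2 : ℤ) ≤ p)]
    have hpK : (0 : ℤ) < (p : ℤ) ^ K := by positivity
    have hsplit : powSum p hi - a₀ * (p : ℤ) ^ n₀ = E - powSum p lo := by
      rw [powSum_append] at h
      linarith
    rw [hsplit]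
    have := abs_sub E (powSum p lo)
    rw [abs_of_nonneg (powSum_nonneg lo)] at this
    linarith
  have := Int.eq_zero_of_abs_lt_dvd
    (dvd_sub hdvd (Dvd.dvd.mul_left (pow_dvd_pow _ (by omega)) _)) hsmall
  refine ⟨hi, lo, rfl, by linarith, ?_⟩
  rw [powSum_append] at h
  linarith

theorem eq_of_powSum_eq_powSum_add {p B M G Γ : ℕ} (hp : 2 ≤ p) {A : List (ℕ × ℕ)}
    (hG : A.length * B + M ≤ p ^ G) (hΓ : (A.length + 2) * (G + 2) ≤ Γ)
    (hA : ∀ t ∈ A, t.1 ≤ B ∧ ¬ p ∣ t.1 ∧ Γ ≤ t.2) (hAgap : A.Pairwise fun t t' => t'.2 + Γ ≤ t.2)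
    {L : List (ℕ × ℕ)} (hL : ∀ t ∈ L, t.1 ≤ B ∧ ¬ p ∣ t.1)
    (hLsorted : L.Pairwise fun t t' => t'.2 < t.2) (hlen : L.length ≤ A.length)
    {c : ℤ} (hc : |c| ≤ M) (h : powSum p L = powSum p A + c) : L = A ∧ c = 0 := by
  induction A generalizing L c with
  | nil =>
    obtain rfl := List.eq_nil_of_length_eq_zero (Nat.le_zero.mp hlen)
    exact ⟨rfl, by simpa using h.symm⟩
  | cons t A ih =>
    obtain ⟨a₀, n₀⟩ := t
    simp only [List.length_cons] at hG hΓ hlen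
    simp only [List.mem_cons, forall_eq_or_imp] at hA
    rw [List.pairwise_cons] at hAgap
    have hGA : A.length * B + M ≤ p ^ G := le_trans (by nlinarith) hG
    have hE := abs_powSum_add_le (n := n₀ - Γ) (by omega) (fun t ht =>
      ⟨(hA.2 t ht).1, by have := hAgap.1 t ht; simp only at this; omega⟩) hGA hc
    have hn₀ : n₀ - Γ + (L.length + 1) * (G + 2) ≤ n₀ := by
      have := Nat.mul_le_mul_right (G + 2) (by omega : L.length + 1 ≤ A.length + 1 + 2)
      have := hA.1.2.2
      omega
    obtain ⟨hi, lo, rfl, hhi, hlo⟩ := exists_append_powSum_eq_mul_pow_add hp hLsorted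
      (fun t ht => (hL t ht).1) (le_trans (by nlinarith) hG) hn₀ hE
      (by rw [h, powSum_cons, add_assoc])
    have hhi_ne : hi ≠ [] := by
      rintro rfl
      have ha₀ : (0 : ℤ) < a₀ := by
        have : a₀ ≠ 0 := by rintro rfl; exact hA.1.2.1 (dvd_zero p)
        positivity
      have : (0 : ℤ) < p ^ n₀ := by positivity
      simp only [powSum_nil] at hhi
      nlinarith
    obtain ⟨rfl, rfl⟩ := ih hGA (le_trans (by nlinarith) hΓ) hA.2 hAgap.2
      (fun t ht => hL t (by simp [ht])) (hLsorted.sublist (List.sublist_append_right _ _))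
      (by have := List.length_pos_of_ne_nil hhi_ne; simp only [List.length_append] at hlen; omega)
      hc hlo
    obtain ⟨⟨b, m⟩, rfl⟩ : ∃ t, hi = [t] := List.length_eq_one_iff.mp (by
      have := List.length_pos_of_ne_nil hhi_ne; simp only [List.length_append] at hlen; omega)
    obtain ⟨rfl, rfl⟩ := Nat.eq_and_eq_of_mul_pow_eq (by omega) (hL (b, m) (by simp)).2 hA.1.2.1
      (by simp only [powSum_cons, powSum_nil, add_zero] at hhi; exact_mod_cast hhi)
    exact ⟨rfl, rfl⟩

lemma le_powSum_of_mem {p : ℕ} {t : ℕ × ℕ} {l : List (ℕ × ℕ)} (ht : t ∈ l) :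
    t.1 * (p : ℤ) ^ t.2 ≤ powSum p l := by
  induction l with
  | nil => simp at ht
  | cons s l ih =>
    rw [powSum_cons]
    rcases List.mem_cons.mp ht with rfl | ht
    · linarith [powSum_nonneg (p := p) l]
    · linarith [ih ht, (by positivity : (0 : ℤ) ≤ s.1 * (p : ℤ) ^ s.2)]

lemma pow_le_powSum_ofFn {p ρ Γ : ℕ} (hρ : 0 < ρ) {a : Fin ρ → ℕ} (ha : ∀ j, a j ≠ 0) :
    (p : ℤ) ^ Γ ≤ powSum p (List.ofFn fun j : Fin ρ => (a j, (ρ - j) * Γ)) := by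
  set j : Fin ρ := ⟨ρ - 1, by omega⟩
  have hmem : (a j, (ρ - j) * Γ) ∈ List.ofFn fun j : Fin ρ => (a j, (ρ - j) * Γ) :=
    List.mem_ofFn.mpr ⟨j, rfl⟩
  have hlast := le_powSum_of_mem (p := p) hmem
  have hj : (ρ - j) * Γ = Γ := by simp only [j]; rw [Nat.sub_sub_self hρ]; exact one_mul Γ
  simp only [hj] at hlast
  have : (1 : ℤ) ≤ a j := by exact_mod_cast Nat.one_le_iff_ne_zero.mpr (ha j)
  nlinarith [(by positivity : (0 : ℤ) ≤ (p : ℤ) ^ Γ)]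

lemma HahnSeries.coeff_mul_eq_of_forall_ne {Γ R : Type*} [AddCommGroup Γ] [PartialOrder Γ]
    [IsOrderedAddMonoid Γ] [NonUnitalNonAssocSemiring R] {x y : HahnSeries Γ R} {g e : Γ}
    (h : ∀ u ∈ x.support, u ≠ e → y.coeff (g - u) = 0) :
    (x * y).coeff g = x.coeff e * y.coeff (g - e) := by
  rw [HahnSeries.coeff_mul]
  refine Finset.sum_eq_single (f := fun uv : Γ × Γ => x.coeff uv.1 * y.coeff uv.2) (e, g - e)
    (fun ⟨u, v⟩ huv hne => ?_) (fun hnot => ?_)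
  · obtain ⟨hu, -, rfl⟩ := Finset.mem_antidiagonal.mp huv
    have hue : u ≠ e := by rintro rfl; exact hne (by simp)
    simp only
    rw [← add_sub_cancel_left u v, h u hu hue, mul_zero]
  · by_contra hne
    exact hnot (Finset.mem_antidiagonal.mpr
      ⟨left_ne_zero_of_mul hne, right_ne_zero_of_mul hne, add_sub_cancel e g⟩)

lemma coeff_HserR (p : ℕ) (R : Type*) [CommRing R] {r : ℕ} (a : Fin r → ℕ) (v : ℤ) :
    (HserR p R a).coeff v =
      (Set.ncard {x : Fin r → ℕ | StrictAnti x ∧ ((∑ i, a i * p ^ x i : ℕ) : ℤ) = v} : R) := by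
  rw [HserR, PowerSeries.coeff_coe]
  split_ifs with hv
  · have : {x : Fin r → ℕ | StrictAnti x ∧ ((∑ i, a i * p ^ x i : ℕ) : ℤ) = v} = ∅ :=
      Set.eq_empty_of_forall_notMem fun x hx => by have := hx.2; omega
    rw [this, Set.ncard_empty, Nat.cast_zero]
  · obtain ⟨n, rfl⟩ := Int.eq_ofNat_of_zero_le (not_lt.mp hv)
    simp only [Int.natAbs_natCast, PowerSeries.coeff_map, Hser, PowerSeries.coeff_mk,
      Int.coe_castRingHom, Int.cast_natCast, Nat.cast_inj]

lemma coeff_HserR_powSum_add {p B M G Γ ρ s : ℕ} (hp : 2 ≤ p) (R : Type*) [CommRing R]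
    (hG : ρ * B + M ≤ p ^ G) (hΓ : (ρ + 2) * (G + 2) ≤ Γ)
    {a₀ n : Fin ρ → ℕ} (ha₀ : ∀ j, a₀ j ≤ B ∧ ¬ p ∣ a₀ j) (hn : ∀ j, Γ ≤ n j)
    (hgap : ∀ ⦃j j'⦄, j < j' → n j' + Γ ≤ n j)
    {b : Fin s → ℕ} (hb : ∀ k, b k ≤ B ∧ ¬ p ∣ b k) (hs : s ≤ ρ) {c : ℤ} (hc : |c| ≤ M) :
    (HserR p R b).coeff (powSum p (List.ofFn fun j => (a₀ j, n j)) + c) =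
      if (⟨s, b⟩ : Σ n : ℕ, Fin n → ℕ) = ⟨ρ, a₀⟩ ∧ c = 0 then 1 else 0 := by
  have hrigid (x : Fin s → ℕ) (hx : StrictAnti x)
      (h : ((∑ k, b k * p ^ x k : ℕ) : ℤ) = powSum p (List.ofFn fun j => (a₀ j, n j)) + c) :
      List.ofFn (fun k => (b k, x k)) = List.ofFn (fun j => (a₀ j, n j)) ∧ c = 0 :=
    eq_of_powSum_eq_powSum_add hp (by simpa using hG) (by simpa using hΓ)
      (List.forall_mem_ofFn_iff.mpr fun j => ⟨(ha₀ j).1, (ha₀ j).2, hn j⟩)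
      (List.pairwise_ofFn.mpr hgap) (List.forall_mem_ofFn_iff.mpr hb)
      (List.pairwise_ofFn.mpr fun _ _ hkk' => hx hkk') (by simpa using hs) hc
      (by rw [powSum_ofFn, h])
  rw [coeff_HserR]
  split_ifs with hcond
  · obtain ⟨hσ, rfl⟩ := hcond
    obtain ⟨rfl, hba⟩ := Sigma.mk.inj_iff.mp hσ
    obtain rfl := eq_of_heq hba
    have hΓ0 : 0 < Γ := lt_of_lt_of_le (by positivity) hΓ
    have : {x : Fin s → ℕ | StrictAnti x ∧ ((∑ k, b k * p ^ x k : ℕ) : ℤ) =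
        powSum p (List.ofFn fun j => (b j, n j)) + 0} = {n} := by
      ext x
      refine ⟨fun ⟨hx, hsum⟩ => funext fun k => ?_, ?_⟩
      · exact congrArg Prod.snd (congrFun (List.ofFn_injective (hrigid x hx hsum).1) k)
      · rintro rfl
        exact ⟨fun j j' hjj' => by have := hgap hjj'; omega, by rw [add_zero, powSum_ofFn]⟩
    rw [this, Set.ncard_singleton, Nat.cast_one]
  · have : {x : Fin s → ℕ | StrictAnti x ∧ ((∑ k, b k * p ^ x k : ℕ) : ℤ) =
        powSum p (List.ofFn fun j => (a₀ j, n j)) + c} = ∅ := by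
      refine Set.eq_empty_of_forall_notMem fun x ⟨hx, hsum⟩ => hcond ⟨?_, (hrigid x hx hsum).2⟩
      have := congrArg (List.map Prod.fst) (hrigid x hx hsum).1
      simp only [List.map_ofFn, Function.comp_def] at this
      exact List.ofFn_inj'.mp this
    rw [this, Set.ncard_empty, Nat.cast_zero]

theorem eq_zero_of_forall_ne_zero_length_le {p B M : ℕ} (hp : 2 ≤ p) {R : Type*} [CommRing R]
    {N : ℕ} {r : Fin N → ℕ} {a : (i : Fin N) → Fin (r i) → ℕ}
    (hB : ∀ i j, a i j ≤ B) (hndvd : ∀ i j, ¬ p ∣ a i j)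
    (hdist : ∀ i j, i ≠ j → (⟨r i, a i⟩ : Σ n : ℕ, Fin n → ℕ) ≠ ⟨r j, a j⟩)
    {q₀ : LaurentSeries R} {q : Fin N → LaurentSeries R}
    (hM : ∀ u : ℤ, M < |u| → q₀.coeff u = 0 ∧ ∀ i, (q i).coeff u = 0)
    (heq : q₀ + ∑ i, q i * HserR p R (a i) = 0) {i₀ : Fin N} (hr : 0 < r i₀)
    (hmax : ∀ i, q i ≠ 0 → r i ≤ r i₀) : q i₀ = 0 := by
  ext e
  set ρ := r i₀
  set M' := M + e.natAbs
  set G := ρ * B + M'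
  set Γ := (ρ + 2) * (G + 2) + M'
  set A := List.ofFn fun j : Fin ρ => (a i₀ j, (ρ - j) * Γ)
  have hcoeff (i : Fin N) (hi : r i ≤ ρ) (c : ℤ) (hc : |c| ≤ M') :
      (HserR p R (a i)).coeff (powSum p A + c) = if i = i₀ ∧ c = 0 then 1 else 0 := by
    rw [coeff_HserR_powSum_add hp R (G := G) (Γ := Γ) (Nat.lt_pow_self (by omega)).le (by omega)
      (fun j => ⟨hB i₀ j, hndvd i₀ j⟩) (fun j => Nat.le_mul_of_pos_left Γ (by omega))
      (fun j j' hjj' => by rw [← Nat.succ_mul]; exact Nat.mul_le_mul_right Γ (by omega))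
      (fun k => ⟨hB i k, hndvd i k⟩) hi hc]
    exact if_congr (and_congr_left' ⟨fun h => by_contra fun hne => hdist i i₀ hne h,
      by rintro rfl; rfl⟩) rfl rfl
  have hT : (M : ℤ) < powSum p A + e := by
    have hΓ : (M' : ℤ) < (p : ℤ) ^ Γ := by
      exact_mod_cast lt_of_le_of_lt (by omega) (Nat.lt_pow_self (by omega))
    have hA := pow_le_powSum_ofFn (p := p) (Γ := Γ) hr
      fun j (h : a i₀ j = 0) => hndvd i₀ j (h ▸ dvd_zero p)
    simp only [M', Nat.cast_add, Int.natCast_natAbs] at hΓ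
    linarith [neg_abs_le e]
  have hterm (i : Fin N) :
      (q i * HserR p R (a i)).coeff (powSum p A + e) = if i = i₀ then (q i₀).coeff e else 0 := by
    by_cases hqi : q i = 0
    · split_ifs with h
      · subst h; simp [hqi]
      · simp [hqi]
    rw [HahnSeries.coeff_mul_eq_of_forall_ne (e := e) fun u hu hue => ?_]
    · rw [add_sub_cancel_right, ← add_zero (powSum p A), hcoeff i (hmax i hqi) 0 (by simp)]
      by_cases h : i = i₀
      · subst h; simp
      · simp [h]
    · have hu' : |u| ≤ M := not_lt.mp fun h => hu ((hM u h).2 i)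
      rw [add_sub_assoc, hcoeff i (hmax i hqi) (e - u) (by
        simp only [M', Nat.cast_add, Int.natCast_natAbs]
        linarith [abs_sub e u]), if_neg fun h => hue (by linarith [h.2])]
  simpa only [HahnSeries.coeff_add, HahnSeries.coeff_sum, hterm, HahnSeries.coeff_zero,
    (hM _ (hT.trans_le (le_abs_self _))).1, Finset.sum_ite_eq', Finset.mem_univ, if_true,
    zero_add] using congrArg (HahnSeries.coeff · (powSum p A + e)) heq

theorem stmt_6_general (p : ℕ) (hp : p.Prime) (R : Type*) [CommRing R]
    (N : ℕ) (r : Fin N → ℕ) (hr : ∀ i, 0 < r i)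
    (a : (i : Fin N) → Fin (r i) → ℕ)
    (hcop : ∀ i j, Nat.Coprime (a i j) p)
    (hdist : ∀ i j, i ≠ j →
      (⟨r i, a i⟩ : Σ n : ℕ, Fin n → ℕ) ≠ ⟨r j, a j⟩)
    (q₀ : LaurentSeries R) (hq₀ : q₀.support.Finite)
    (q : Fin N → LaurentSeries R) (hq : ∀ i, (q i).support.Finite)
    (heq : q₀ + ∑ i, q i * HserR p R (a i) = 0) :
    q₀ = 0 ∧ ∀ i, q i = 0 := by
  have hndvd (i j) : ¬ p ∣ a i j := fun h => hp.ne_one ((hcop i j).symm.eq_one_of_dvd h)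
  obtain ⟨B, hB⟩ := Finite.bddAbove_range fun x : Σ i, Fin (r i) => a x.1 x.2
  obtain ⟨M, hM⟩ := ((hq₀.union (Set.finite_iUnion hq)).image Int.natAbs).bddAbove
  have hMq (u : ℤ) (hu : M < |u|) : q₀.coeff u = 0 ∧ ∀ i, (q i).coeff u = 0 := by
    have hu' : u ∉ q₀.support ∪ ⋃ i, (q i).support := fun h => by
      have := hM (Set.mem_image_of_mem Int.natAbs h)
      rw [Int.abs_eq_natAbs] at hu
      omega
    simp only [Set.mem_union, Set.mem_iUnion, HahnSeries.mem_support, not_or, not_exists,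
      not_not] at hu'
    exact hu'
  have hq0 : ∀ i, q i = 0 := by
    classical
    by_contra! h
    obtain ⟨i₀, hi₀, hmax⟩ := Finset.exists_max_image {i | q i ≠ 0} r
      (by simpa [Finset.filter_nonempty_iff] using h)
    exact (Finset.mem_filter.mp hi₀).2 (eq_zero_of_forall_ne_zero_length_le hp.two_le
      (fun i j => hB ⟨⟨i, j⟩, rfl⟩) hndvd hdist hMq heq (hr i₀) fun i hi => hmax i (by simp [hi]))
  exact ⟨by simpa [hq0] using heq, hq0⟩

/-- Linear independence, over the Laurent polynomials `R[z,z⁻¹]` (here represented as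
Laurent series with finite support), of the family consisting of `1` together with the
series `H_{a_1,…,a_r}(z)` whose parameters are all relatively prime to `p`:
if `q_0 + Σ_i q_i · H_{a^{(i)}}(z) = 0` with pairwise distinct tuples `a^{(i)}`,
then all the `q_i` vanish. -/
theorem stmt_6 (p : ℕ) (hp : p.Prime) (R : Type*) [CommRing R]
    (N : ℕ) (r : Fin N → ℕ) (hr : ∀ i, 0 < r i)
    (a : (i : Fin N) → Fin (r i) → ℕ)
    (hpos : ∀ i j, 0 < a i j) (hcop : ∀ i j, Nat.Coprime (a i j) p)
    (hdist : ∀ i j, i ≠ j →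
      (⟨r i, a i⟩ : Σ n : ℕ, Fin n → ℕ) ≠ ⟨r j, a j⟩)
    (q₀ : LaurentSeries R) (hq₀ : q₀.support.Finite)
    (q : Fin N → LaurentSeries R) (hq : ∀ i, (q i).support.Finite)
    (heq : q₀ + ∑ i, q i * HserR p R (a i) = 0) :
    q₀ = 0 ∧ ∀ i, q i = 0 :=
  stmt_6_general p hp R N r hr a hcop hdist q₀ hq₀ q hq heq
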